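/- Gain score lower bound: Let (Ω, P) be a finite probability space carrying random vectors y_t, y_v, ŷ_t, ŷ_v ∈ ℝ^c and X'_t, X'_v ∈ ℝ^{d'}, such that E[(ŷ_t − y_t) ⊗ X'_t] = E[ŷ_t − y_t] ⊗ E[X'_t], E[(ŷ_v − y_v) ⊗ X'_v] = E[ŷ_v − y_v] ⊗ E[X'_v], and E[X'_t] = E[X'_v]. Define g_t = (ŷ_t − y_t, (ŷ_t − y_t) ⊗ X'_t) and g_v = (ŷ_v − y_v, (ŷ_v − y_v) ⊗ X'_v). Then ⟨E[g_t], E[g_v]⟩ = ⟨E[ŷ_t − y_t], E[ŷ_v − y_v]⟩ · (1 + ‖E[X']‖²) ≥ ⟨E[ŷ_t − y_t], E[ŷ_v − y_v]⟩, provided ⟨E[ŷ_t − y_t], E[ŷ_v − y_v]⟩ ≥ 0; without the sign condition, we always have ⟨E[g_t], E[g_v]⟩ = ⟨E[ŷ_t − y_t], E[ŷ_v − y_v]⟩ (1 + ‖E[X']‖²). -/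

import Mathlib

/-!
The independence hypotheses make the expected gradients the concatenations `(u, u ⊗ x)` and
`(v, v ⊗ x)` with `u, v` the expected residuals and `x = E[X']`. Inner products of
concatenations add up, and `⟪u ⊗ x, v ⊗ x⟫ = ⟪u, v⟫ ‖x‖²`, so the gain score is
`⟪u, v⟫ (1 + ‖x‖²)`, which dominates `⟪u, v⟫` when that is nonnegative.
-/

open scoped RealInnerProductSpace

/-- Outer product of two Euclidean vectors, flattened to a Euclidean vector. -/
def eOuter {c d : ℕ} (u : EuclideanSpace ℝ (Fin c)) (x : EuclideanSpace ℝ (Fin d)) :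
    EuclideanSpace ℝ (Fin c × Fin d) :=
  WithLp.toLp 2 (fun q => u q.1 * x q.2)

/-- Concatenation of two Euclidean vectors. -/
def eConcat {ι κ : Type*} (a : EuclideanSpace ℝ ι) (b : EuclideanSpace ℝ κ) :
    EuclideanSpace ℝ (ι ⊕ κ) :=
  WithLp.toLp 2 (Sum.elim a b)

/-- Expectation of a vector-valued random variable on a finite probability space
with weights `p`. -/
def eExpect {Ω : Type*} [Fintype Ω] (p : Ω → ℝ) {E : Type*} [AddCommMonoid E] [Module ℝ E]
    (Y : Ω → E) : E :=
  ∑ ω, p ω • Y ω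

lemma eExpect_apply {Ω ι : Type*} [Fintype Ω] (p : Ω → ℝ) (Y : Ω → EuclideanSpace ℝ ι) (i : ι) :
    eExpect p Y i = ∑ ω, p ω * Y ω i := by
  simp [eExpect, WithLp.ofLp_sum]

lemma eExpect_eConcat {Ω ι κ : Type*} [Fintype Ω] (p : Ω → ℝ)
    (a : Ω → EuclideanSpace ℝ ι) (b : Ω → EuclideanSpace ℝ κ) :
    eExpect p (fun ω => eConcat (a ω) (b ω)) = eConcat (eExpect p a) (eExpect p b) := by
  ext (i | j) <;> simp [eExpect_apply, eConcat]

lemma inner_eConcat {ι κ : Type*} [Fintype ι] [Fintype κ]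
    (a a' : EuclideanSpace ℝ ι) (b b' : EuclideanSpace ℝ κ) :
    ⟪eConcat a b, eConcat a' b'⟫ = ⟪a, a'⟫ + ⟪b, b'⟫ := by
  simp [PiLp.inner_apply, eConcat, Fintype.sum_sum_type]

lemma inner_eOuter {c d : ℕ} (u u' : EuclideanSpace ℝ (Fin c))
    (x x' : EuclideanSpace ℝ (Fin d)) :
    ⟪eOuter u x, eOuter u' x'⟫ = ⟪u, u'⟫ * ⟪x, x'⟫ := by
  simp only [PiLp.inner_apply, eOuter, RCLike.inner_apply, conj_trivial, Fintype.sum_prod_type,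
    Finset.sum_mul_sum]
  exact Finset.sum_congr rfl fun i _ => Finset.sum_congr rfl fun j _ => by ring

lemma inner_eConcat_eOuter_same {c d : ℕ} (u v : EuclideanSpace ℝ (Fin c))
    (x : EuclideanSpace ℝ (Fin d)) :
    ⟪eConcat u (eOuter u x), eConcat v (eOuter v x)⟫ = ⟪u, v⟫ * (1 + ‖x‖ ^ 2) := by
  rw [inner_eConcat, inner_eOuter, real_inner_self_eq_norm_sq]
  ring

theorem gain_score_identity_and_lower_bound_general {Ω : Type*} [Fintype Ω] (p : Ω → ℝ)
    {c d' : ℕ} (yt yv yht yhv : Ω → EuclideanSpace ℝ (Fin c))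
    (Xt Xv : Ω → EuclideanSpace ℝ (Fin d'))
    (hft : eExpect p (fun ω => eOuter (yht ω - yt ω) (Xt ω))
        = eOuter (eExpect p (fun ω => yht ω - yt ω)) (eExpect p Xt))
    (hfv : eExpect p (fun ω => eOuter (yhv ω - yv ω) (Xv ω))
        = eOuter (eExpect p (fun ω => yhv ω - yv ω)) (eExpect p Xv))
    (hX : eExpect p Xt = eExpect p Xv) :
    ⟪eExpect p (fun ω => eConcat (yht ω - yt ω) (eOuter (yht ω - yt ω) (Xt ω))),
      eExpect p (fun ω => eConcat (yhv ω - yv ω) (eOuter (yhv ω - yv ω) (Xv ω)))⟫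
      = ⟪eExpect p (fun ω => yht ω - yt ω), eExpect p (fun ω => yhv ω - yv ω)⟫
          * (1 + ‖eExpect p Xt‖ ^ 2)
    ∧ (0 ≤ ⟪eExpect p (fun ω => yht ω - yt ω), eExpect p (fun ω => yhv ω - yv ω)⟫ →
        ⟪eExpect p (fun ω => yht ω - yt ω), eExpect p (fun ω => yhv ω - yv ω)⟫
          ≤ ⟪eExpect p (fun ω => eConcat (yht ω - yt ω) (eOuter (yht ω - yt ω) (Xt ω))),
              eExpect p (fun ω => eConcat (yhv ω - yv ω) (eOuter (yhv ω - yv ω) (Xv ω)))⟫) := by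
  have identity : ⟪eExpect p (fun ω => eConcat (yht ω - yt ω) (eOuter (yht ω - yt ω) (Xt ω))),
      eExpect p (fun ω => eConcat (yhv ω - yv ω) (eOuter (yhv ω - yv ω) (Xv ω)))⟫
      = ⟪eExpect p (fun ω => yht ω - yt ω), eExpect p (fun ω => yhv ω - yv ω)⟫
          * (1 + ‖eExpect p Xt‖ ^ 2) := by
    rw [eExpect_eConcat, eExpect_eConcat, hft, hfv, ← hX, inner_eConcat_eOuter_same]
  refine ⟨identity, fun h_nonneg => identity ▸ le_mul_of_one_le_right h_nonneg ?_⟩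
  exact le_add_of_nonneg_right (sq_nonneg _)

theorem gain_score_identity_and_lower_bound {Ω : Type*} [Fintype Ω] (p : Ω → ℝ)
    (hp : ∀ ω, 0 ≤ p ω) (hsum : ∑ ω, p ω = 1)
    {c d' : ℕ} (yt yv yht yhv : Ω → EuclideanSpace ℝ (Fin c))
    (Xt Xv : Ω → EuclideanSpace ℝ (Fin d'))
    (hft : eExpect p (fun ω => eOuter (yht ω - yt ω) (Xt ω))
        = eOuter (eExpect p (fun ω => yht ω - yt ω)) (eExpect p Xt))
    (hfv : eExpect p (fun ω => eOuter (yhv ω - yv ω) (Xv ω))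
        = eOuter (eExpect p (fun ω => yhv ω - yv ω)) (eExpect p Xv))
    (hX : eExpect p Xt = eExpect p Xv) :
    ⟪eExpect p (fun ω => eConcat (yht ω - yt ω) (eOuter (yht ω - yt ω) (Xt ω))),
      eExpect p (fun ω => eConcat (yhv ω - yv ω) (eOuter (yhv ω - yv ω) (Xv ω)))⟫
      = ⟪eExpect p (fun ω => yht ω - yt ω), eExpect p (fun ω => yhv ω - yv ω)⟫
          * (1 + ‖eExpect p Xt‖ ^ 2)
    ∧ (0 ≤ ⟪eExpect p (fun ω => yht ω - yt ω), eExpect p (fun ω => yhv ω - yv ω)⟫ →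
        ⟪eExpect p (fun ω => yht ω - yt ω), eExpect p (fun ω => yhv ω - yv ω)⟫
          ≤ ⟪eExpect p (fun ω => eConcat (yht ω - yt ω) (eOuter (yht ω - yt ω) (Xt ω))),
              eExpect p (fun ω => eConcat (yhv ω - yv ω) (eOuter (yhv ω - yv ω) (Xv ω)))⟫) :=
  gain_score_identity_and_lower_bound_general p yt yv yht yhv Xt Xv hft hfv hX
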